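/- arXiv:0804.0405 — 2 statements merged into one kernel-verified Lean document; each statement's English description precedes it below -/
import Mathlib

section
/- Let n ≥ 2, K ∈ 𝒦, let f : ℝ^{n−1} → ℝ be Lipschitz, let L > max{1, Lip(f)}, and let ν ∈ Δ satisfy ν(H_f^+ ∪ C_f) = 0. Then there is a constant C_N, depending only on n, L and the constants C₀, C₁ of K, such that for every g ∈ L¹(ν) and every x ∈ C_f: N(T*_{ν,K} g)(x) ≤ C_N (T*_{ν,K} g(x) + M_ν g(x)), where N(h)(x) = sup{|h(y)| : y ∈ Γ(x)} and M_ν g(x) = sup_{r>0} r^{1−n} ∫_{B(x,r)} |g| dν. -/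
/-!
Let `y` lie in the cone over `x ∈ C_f`. Since `ν` lives strictly below the graph, the cone
geometry gives `‖y - x‖ ≤ 8 L ‖y - z‖` for `ν`-a.e. `z`. Compare `T^ε g(y)` with `T^{ε'} g(x)`,
`ε' = 2 (‖y - x‖ + ε)`: on `B(x, ε')` the kernel `K(y - ·)` is at most `C₀ (32 L / ε')^{n-1}` on the
support of `ν`, so this part is controlled by `M_ν g(x)`; off `B(x, ε')` the gradient bound gives
`|K(y - z) - K(x - z)| ≤ 2^n C₁ ‖y - x‖ ‖x - z‖^{-n}`, and summing over dyadic annuli around `x`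
bounds this part by `M_ν g(x)` as well.
-/

open MeasureTheory Metric ENNReal Filter Set Topology

noncomputable section

/-- Projection of a point of `ℝ^(m+1)` onto its first `m` coordinates. -/
def proj {m : ℕ} (p : EuclideanSpace ℝ (Fin (m + 1))) : EuclideanSpace ℝ (Fin m) :=
  WithLp.toLp 2 (fun i : Fin m => p i.castSucc)

/-- The graph `C_f` of `f : ℝ^m → ℝ`, as a subset of `ℝ^(m+1)`. -/
def graphSet {m : ℕ} (f : EuclideanSpace ℝ (Fin m) → ℝ) :
    Set (EuclideanSpace ℝ (Fin (m + 1))) :=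
  {p | p (Fin.last m) = f (proj p)}

/-- The open region `H_f^+` above the graph of `f`. -/
def upperSet {m : ℕ} (f : EuclideanSpace ℝ (Fin m) → ℝ) :
    Set (EuclideanSpace ℝ (Fin (m + 1))) :=
  {p | f (proj p) < p (Fin.last m)}

/-- The cone `Γ((u₀, f u₀)) = {(u,t) : t - f u₀ > 4 L |u - u₀|}`. -/
def cone {m : ℕ} (f : EuclideanSpace ℝ (Fin m) → ℝ) (L : ℝ)
    (u₀ : EuclideanSpace ℝ (Fin m)) : Set (EuclideanSpace ℝ (Fin (m + 1))) :=
  {p | 4 * L * ‖proj p - u₀‖ < p (Fin.last m) - f u₀}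

/-- The truncated singular integral operator `T^ε_{ν,K}`. -/
def trunc {n : ℕ} (ν : Measure (EuclideanSpace ℝ (Fin n)))
    (K : EuclideanSpace ℝ (Fin n) → ℝ) (ε : ℝ)
    (g : EuclideanSpace ℝ (Fin n) → ℝ) (x : EuclideanSpace ℝ (Fin n)) : ℝ :=
  ∫ y in (closedBall x ε)ᶜ, K (x - y) * g y ∂ν

/-- The maximal singular integral operator `T^*_{ν,K}` (with values in `ℝ≥0∞`). -/
def maximalOp {n : ℕ} (ν : Measure (EuclideanSpace ℝ (Fin n)))
    (K : EuclideanSpace ℝ (Fin n) → ℝ)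
    (g : EuclideanSpace ℝ (Fin n) → ℝ) (x : EuclideanSpace ℝ (Fin n)) : ℝ≥0∞ :=
  ⨆ (ε : ℝ) (_ : 0 < ε), ENNReal.ofReal |trunc ν K ε g x|

/-- The maximal function `M_ν g(x) = sup_{ρ>0} ρ^{1-n} ∫_{B(x,ρ)} |g| dν` (here `n = m + 1`,
so `1 - n = -m`). -/
def radialMax {m : ℕ} (ν : Measure (EuclideanSpace ℝ (Fin (m + 1))))
    (g : EuclideanSpace ℝ (Fin (m + 1)) → ℝ)
    (x : EuclideanSpace ℝ (Fin (m + 1))) : ℝ≥0∞ :=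
  ⨆ (ρ : ℝ) (_ : 0 < ρ),
    ENNReal.ofReal (ρ ^ (-(m : ℝ))) * ∫⁻ y in closedBall x ρ, ENNReal.ofReal |g y| ∂ν

section Coordinates

variable {m : ℕ}

lemma proj_sub (p q : EuclideanSpace ℝ (Fin (m + 1))) : proj (p - q) = proj p - proj q := by
  ext i; simp [proj]

lemma norm_sq_eq_norm_proj_sq_add_sq (p : EuclideanSpace ℝ (Fin (m + 1))) :
    ‖p‖ ^ 2 = ‖proj p‖ ^ 2 + p (Fin.last m) ^ 2 := by
  rw [EuclideanSpace.norm_sq_eq, EuclideanSpace.norm_sq_eq, Fin.sum_univ_castSucc]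
  simp [proj]

lemma norm_proj_le (p : EuclideanSpace ℝ (Fin (m + 1))) : ‖proj p‖ ≤ ‖p‖ := by
  have := norm_sq_eq_norm_proj_sq_add_sq p
  nlinarith [norm_nonneg p, norm_nonneg (proj p), sq_nonneg (p (Fin.last m))]

lemma abs_last_le_norm (p : EuclideanSpace ℝ (Fin (m + 1))) : |p (Fin.last m)| ≤ ‖p‖ :=
  abs_le_of_sq_le_sq (by nlinarith [norm_sq_eq_norm_proj_sq_add_sq p]) (norm_nonneg p)

lemma norm_le_norm_proj_add_abs_last (p : EuclideanSpace ℝ (Fin (m + 1))) :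
    ‖p‖ ≤ ‖proj p‖ + |p (Fin.last m)| := by
  have := norm_sq_eq_norm_proj_sq_add_sq p
  nlinarith [norm_nonneg p, norm_nonneg (proj p), abs_nonneg (p (Fin.last m)),
    sq_abs (p (Fin.last m))]

end Coordinates

section Cone

variable {m : ℕ} {f : EuclideanSpace ℝ (Fin m) → ℝ} {L : ℝ}
  {x y z : EuclideanSpace ℝ (Fin (m + 1))}

lemma norm_sub_le_of_mem_cone (hL : 1 ≤ L) (hx : x ∈ graphSet f) (hy : y ∈ cone f L (proj x)) :
    ‖y - x‖ ≤ 2 * (y (Fin.last m) - f (proj x)) := by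
  have hxy := norm_le_norm_proj_add_abs_last (y - x)
  rw [proj_sub, PiLp.sub_apply, hx] at hxy
  have hy' : 4 * L * ‖proj y - proj x‖ < y (Fin.last m) - f (proj x) := hy
  have hproj := norm_nonneg (proj y - proj x)
  rw [abs_of_pos (by nlinarith)] at hxy
  nlinarith

lemma sub_le_mul_norm_sub_of_mem_cone {Lf : NNReal} (hf : LipschitzWith Lf f) (hLf : Lf ≤ L)
    (hL : 1 ≤ L) (hy : y ∈ cone f L (proj x)) (hz : z (Fin.last m) < f (proj z)) :
    y (Fin.last m) - f (proj x) ≤ 4 * L * ‖y - z‖ := by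
  have hy' : 4 * L * ‖proj y - proj x‖ < y (Fin.last m) - f (proj x) := hy
  have hproj : ‖proj y - proj z‖ ≤ ‖y - z‖ := proj_sub y z ▸ norm_proj_le (y - z)
  by_cases hfar : y (Fin.last m) - f (proj x) ≤ 4 * L * ‖proj y - proj z‖
  · nlinarith
  -- otherwise `proj z` is close to `proj x`, so by the Lipschitz bound `z` lies well below `y`
  have htri := norm_sub_le_norm_sub_add_norm_sub (proj z) (proj y) (proj x)
  rw [norm_sub_rev (proj z) (proj y)] at htri
  have hlip : f (proj z) - f (proj x) ≤ L * ‖proj z - proj x‖ := by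
    have := hf.dist_le_mul (proj z) (proj x)
    rw [Real.dist_eq, dist_eq_norm] at this
    nlinarith [le_abs_self (f (proj z) - f (proj x)), norm_nonneg (proj z - proj x)]
  have hlast : y (Fin.last m) - z (Fin.last m) ≤ ‖y - z‖ :=
    (le_abs_self _).trans (abs_last_le_norm (y - z))
  nlinarith [norm_nonneg (y - z)]

end Cone

lemma nonneg_of_le_mul_rpow {E : Type*} [NormedAddCommGroup E] [Nontrivial E] {φ : E → ℝ}
    {C s : ℝ} (hφ : ∀ p, 0 ≤ φ p) (h : ∀ p, p ≠ 0 → φ p ≤ C * ‖p‖ ^ s) : 0 ≤ C := by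
  obtain ⟨p, hp⟩ := exists_ne (0 : E)
  exact nonneg_of_mul_nonneg_left ((hφ p).trans (h p hp)) (by positivity)

lemma norm_sub_le_of_norm_fderiv_le {E F : Type*} [NormedAddCommGroup E] [NormedSpace ℝ E]
    [NormedAddCommGroup F] [NormedSpace ℝ F] {K : E → F} {m : ℕ} {C₁ : ℝ}
    (hK : DifferentiableOn ℝ K {0}ᶜ) (hC₁ : 0 ≤ C₁)
    (hK_grad : ∀ p, p ≠ 0 → ‖fderiv ℝ K p‖ ≤ C₁ / ‖p‖ ^ (m + 1)) {a b : E} (ha : a ≠ 0)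
    (hab : 2 * ‖b - a‖ ≤ ‖a‖) :
    ‖K b - K a‖ ≤ 2 ^ (m + 1) * C₁ * ‖b - a‖ / ‖a‖ ^ (m + 1) := by
  have ha' : 0 < ‖a‖ := norm_pos_iff.mpr ha
  have hseg : ∀ p ∈ segment ℝ a b, ‖a‖ / 2 ≤ ‖p‖ := fun p hp => by
    linarith [norm_sub_le_of_mem_segment hp, norm_sub_norm_le a p, norm_sub_rev a p]
  have hne : ∀ p ∈ segment ℝ a b, p ≠ 0 := fun p hp =>
    norm_pos_iff.mp (by linarith [hseg p hp])
  have hderiv : ∀ p ∈ segment ℝ a b, HasFDerivWithinAt K (fderiv ℝ K p) (segment ℝ a b) p :=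
    fun p hp => ((hK p (hne p hp)).differentiableAt
      (isOpen_compl_singleton.mem_nhds (hne p hp))).hasFDerivAt.hasFDerivWithinAt
  have hbound : ∀ p ∈ segment ℝ a b, ‖fderiv ℝ K p‖ ≤ C₁ / (‖a‖ / 2) ^ (m + 1) := fun p hp =>
    (hK_grad p (hne p hp)).trans (div_le_div_of_nonneg_left hC₁ (by positivity)
      (pow_le_pow_left₀ (by positivity) (hseg p hp) _))
  calc ‖K b - K a‖ ≤ C₁ / (‖a‖ / 2) ^ (m + 1) * ‖b - a‖ :=
        (convex_segment a b).norm_image_sub_le_of_norm_hasFDerivWithin_le hderiv hbound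
          (left_mem_segment ℝ a b) (right_mem_segment ℝ a b)
    _ = 2 ^ (m + 1) * C₁ * ‖b - a‖ / ‖a‖ ^ (m + 1) := by
        rw [div_pow]; field_simp

lemma lintegral_compl_closedBall_le {X : Type*} [PseudoMetricSpace X] [MeasurableSpace X]
    [OpensMeasurableSpace X] {ν : Measure X} {w : X → ℝ≥0∞} {x : X} {m : ℕ} {M : ℝ≥0∞}
    (hM : ∀ ρ, 0 < ρ → ∫⁻ z in closedBall x ρ, w z ∂ν ≤ ENNReal.ofReal (ρ ^ m) * M)
    {r : ℝ} (hr : 0 < r) :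
    ∫⁻ z in (closedBall x r)ᶜ, ENNReal.ofReal ((dist z x ^ (m + 1))⁻¹) * w z ∂ν ≤
      ENNReal.ofReal (2 ^ (m + 1) / r) * M := by
  set A : ℕ → Set X := fun k => ball x (2 ^ (k + 1) * r) \ ball x (2 ^ k * r)
  have hcover : (closedBall x r)ᶜ ⊆ ⋃ k, A k := fun z hz => by
    have h1 : 1 ≤ dist z x / r := by
      rw [one_le_div hr]; exact (not_le.mp (mt mem_closedBall.mpr hz)).le
    obtain ⟨k, hk, hk'⟩ := exists_nat_pow_near h1 one_lt_two
    rw [le_div_iff₀ hr] at hk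
    rw [div_lt_iff₀ hr] at hk'
    exact mem_iUnion.mpr ⟨k, mem_ball.mpr hk', fun h => (mem_ball.mp h).not_ge hk⟩
  have hannulus : ∀ k : ℕ, ∫⁻ z in A k, ENNReal.ofReal ((dist z x ^ (m + 1))⁻¹) * w z ∂ν ≤
      ENNReal.ofReal (2 ^ m / r) * M * 2⁻¹ ^ k := fun k => by
    have hk : (0 : ℝ) < 2 ^ k * r := by positivity
    calc ∫⁻ z in A k, ENNReal.ofReal ((dist z x ^ (m + 1))⁻¹) * w z ∂ν
        ≤ ∫⁻ z in A k, ENNReal.ofReal (((2 ^ k * r) ^ (m + 1))⁻¹) * w z ∂ν :=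
          setLIntegral_mono' (measurableSet_ball.diff measurableSet_ball) fun z hz => by
            gcongr
            exact not_lt.mp (fun h => hz.2 (mem_ball.mpr h))
      _ ≤ ENNReal.ofReal (((2 ^ k * r) ^ (m + 1))⁻¹) *
            (ENNReal.ofReal ((2 ^ (k + 1) * r) ^ m) * M) := by
          rw [lintegral_const_mul' _ _ ENNReal.ofReal_ne_top]
          gcongr
          exact (lintegral_mono_set (sdiff_subset.trans ball_subset_closedBall)).trans
            (hM _ (by positivity))
      _ = ENNReal.ofReal (2 ^ m / r) * M * 2⁻¹ ^ k := by
          have : ((2 ^ k * r) ^ (m + 1))⁻¹ * (2 ^ (k + 1) * r) ^ m = 2 ^ m / r * 2⁻¹ ^ k := by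
            rw [inv_pow]; field_simp; ring
          rw [← mul_assoc, ← ENNReal.ofReal_mul (by positivity), this,
            ENNReal.ofReal_mul (by positivity), ENNReal.ofReal_pow (by norm_num),
            ENNReal.ofReal_inv_of_pos two_pos, ENNReal.ofReal_ofNat]
          ring
  calc ∫⁻ z in (closedBall x r)ᶜ, ENNReal.ofReal ((dist z x ^ (m + 1))⁻¹) * w z ∂ν
      ≤ ∑' k, ∫⁻ z in A k, ENNReal.ofReal ((dist z x ^ (m + 1))⁻¹) * w z ∂ν :=
        (lintegral_mono_set hcover).trans (lintegral_iUnion_le _ _)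
    _ ≤ ∑' k : ℕ, ENNReal.ofReal (2 ^ m / r) * M * 2⁻¹ ^ k := ENNReal.tsum_le_tsum hannulus
    _ = ENNReal.ofReal (2 ^ (m + 1) / r) * M := by
        rw [ENNReal.tsum_mul_left, ENNReal.tsum_geometric, ENNReal.one_sub_inv_two, inv_inv,
          mul_right_comm, ← ENNReal.ofReal_ofNat 2, ← ENNReal.ofReal_mul (by positivity)]
        congr 2
        ring

lemma enorm_integral_le_add_lintegral_enorm_sub {α B : Type*} [MeasurableSpace α] {μ : Measure α}
    [NormedAddCommGroup B] [NormedSpace ℝ B] {F G : α → B} (hF : Integrable F μ)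
    (hG : Integrable G μ) :
    ‖∫ a, F a ∂μ‖ₑ ≤ ‖∫ a, G a ∂μ‖ₑ + ∫⁻ a, ‖F a - G a‖ₑ ∂μ :=
  calc ‖∫ a, F a ∂μ‖ₑ = ‖∫ a, G a ∂μ + ∫ a, (F a - G a) ∂μ‖ₑ := by
        rw [integral_sub hF hG, add_sub_cancel]
    _ ≤ _ := (enorm_add_le _ _).trans (by gcongr; exact enorm_integral_le_lintegral_enorm _)

lemma lt_norm_sub_of_mem_compl_closedBall {E : Type*} [SeminormedAddCommGroup E] {x z : E} {r : ℝ}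
    (hz : z ∈ (closedBall x r)ᶜ) : r < ‖x - z‖ :=
  (not_le.mp (mt mem_closedBall.mpr hz)).trans_eq (dist_eq_norm' z x)

section Kernel

variable {E : Type*} [NormedAddCommGroup E] [MeasurableSpace E]
  {ν : Measure E} {K : E → ℝ} {m : ℕ} {C₀ C₁ : ℝ} {g : E → ℝ} {M : ℝ≥0∞}

lemma integrableOn_kernel_compl_closedBall [OpensMeasurableSpace E] (hK : ContinuousOn K {0}ᶜ)
    (hC₀ : 0 ≤ C₀)
    (hK_size : ∀ p, p ≠ 0 → |K p| ≤ C₀ / ‖p‖ ^ m) (hg : Integrable g ν) (x : E) {δ : ℝ}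
    (hδ : 0 < δ) : IntegrableOn (fun z => K (x - z) * g z) (closedBall x δ)ᶜ ν := by
  have hfar : ∀ z ∈ (closedBall x δ)ᶜ, δ < ‖x - z‖ := fun _ => lt_norm_sub_of_mem_compl_closedBall
  have hne : ∀ z ∈ (closedBall x δ)ᶜ, x - z ≠ 0 := fun z hz =>
    norm_pos_iff.mp (hδ.trans (hfar z hz))
  refine Integrable.mono' (hg.norm.const_mul (C₀ / δ ^ m)).restrict ?_ ?_
  · exact ((hK.comp (continuous_const.sub continuous_id).continuousOn hne).aestronglyMeasurable
      measurableSet_closedBall.compl).mul hg.1.restrict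
  · filter_upwards [ae_restrict_mem measurableSet_closedBall.compl] with z hz
    rw [norm_mul, Real.norm_eq_abs]
    refine mul_le_mul_of_nonneg_right ((hK_size _ (hne z hz)).trans ?_) (norm_nonneg _)
    exact div_le_div_of_nonneg_left hC₀ (by positivity) (pow_le_pow_left₀ hδ.le (hfar z hz).le m)

lemma lintegral_kernel_near_le (hC₀ : 0 ≤ C₀) (hK_size : ∀ p, p ≠ 0 → |K p| ≤ C₀ / ‖p‖ ^ m)
    {x y : E} {κ : ℝ} (hκ : 1 ≤ κ) (hxy : ∀ᵐ z ∂ν, ‖y - x‖ ≤ κ * ‖y - z‖)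
    (hM : ∀ ρ, 0 < ρ → ∫⁻ z in closedBall x ρ, ‖g z‖ₑ ∂ν ≤ ENNReal.ofReal (ρ ^ m) * M)
    {ε : ℝ} (hε : 0 < ε) :
    ∫⁻ z in closedBall x (2 * (‖y - x‖ + ε)),
        ‖(closedBall y ε)ᶜ.indicator (fun z => K (y - z) * g z) z‖ₑ ∂ν ≤
      ENNReal.ofReal ((4 * κ) ^ m * C₀) * M := by
  set ε' := 2 * (‖y - x‖ + ε)
  have hε' : 0 < ε' := by positivity
  have hpt : ∀ᵐ z ∂ν, ‖(closedBall y ε)ᶜ.indicator (fun z => K (y - z) * g z) z‖ₑ ≤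
      ENNReal.ofReal ((4 * κ) ^ m * C₀ / ε' ^ m) * ‖g z‖ₑ := by
    filter_upwards [hxy] with z hz
    by_cases hzy : z ∈ closedBall y ε
    · simp [hzy]
    have hyz : ε < ‖y - z‖ := lt_norm_sub_of_mem_compl_closedBall hzy
    -- both `ε` and `‖y - x‖ / κ` are below `‖y - z‖`
    have hε'yz : ε' / (4 * κ) ≤ ‖y - z‖ := by
      rw [div_le_iff₀ (by positivity)]
      nlinarith
    rw [indicator_of_mem hzy, enorm_mul, Real.enorm_eq_ofReal_abs (K _)]
    gcongr
    calc |K (y - z)| ≤ C₀ / ‖y - z‖ ^ m := hK_size _ (norm_pos_iff.mp (hε.trans hyz))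
      _ ≤ C₀ / (ε' / (4 * κ)) ^ m :=
          div_le_div_of_nonneg_left hC₀ (by positivity) (pow_le_pow_left₀ (by positivity) hε'yz m)
      _ = (4 * κ) ^ m * C₀ / ε' ^ m := by rw [div_pow]; field_simp
  calc _ ≤ ∫⁻ z in closedBall x ε', ENNReal.ofReal ((4 * κ) ^ m * C₀ / ε' ^ m) * ‖g z‖ₑ ∂ν :=
        lintegral_mono_ae (ae_restrict_of_ae hpt)
    _ ≤ ENNReal.ofReal ((4 * κ) ^ m * C₀ / ε' ^ m) * (ENNReal.ofReal (ε' ^ m) * M) := by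
        rw [lintegral_const_mul' _ _ ENNReal.ofReal_ne_top]
        gcongr
        exact hM ε' hε'
    _ = ENNReal.ofReal ((4 * κ) ^ m * C₀) * M := by
        rw [← mul_assoc, ← ENNReal.ofReal_mul (by positivity), div_mul_cancel₀ _ (by positivity)]

lemma lintegral_kernel_sub_far_le [NormedSpace ℝ E] [OpensMeasurableSpace E]
    (hK : DifferentiableOn ℝ K {0}ᶜ) (hC₁ : 0 ≤ C₁)
    (hK_grad : ∀ p, p ≠ 0 → ‖fderiv ℝ K p‖ ≤ C₁ / ‖p‖ ^ (m + 1)) {x y : E}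
    (hM : ∀ ρ, 0 < ρ → ∫⁻ z in closedBall x ρ, ‖g z‖ₑ ∂ν ≤ ENNReal.ofReal (ρ ^ m) * M)
    {ε : ℝ} (hε : 0 < ε) :
    ∫⁻ z in (closedBall x (2 * (‖y - x‖ + ε)))ᶜ, ‖(K (y - z) - K (x - z)) * g z‖ₑ ∂ν ≤
      ENNReal.ofReal (4 ^ (m + 1) * C₁) * M := by
  set d := ‖y - x‖
  set ε' := 2 * (d + ε)
  have hε' : 0 < ε' := by positivity
  set c := 2 ^ (m + 1) * C₁ * d
  have hpt : ∀ z ∈ (closedBall x ε')ᶜ, ‖(K (y - z) - K (x - z)) * g z‖ₑ ≤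
      ENNReal.ofReal c * (ENNReal.ofReal ((dist z x ^ (m + 1))⁻¹) * ‖g z‖ₑ) := fun z hz => by
    have hxz : ε' < ‖x - z‖ := lt_norm_sub_of_mem_compl_closedBall hz
    have hK' := norm_sub_le_of_norm_fderiv_le hK hC₁ hK_grad (a := x - z) (b := y - z)
      (norm_pos_iff.mp (hε'.trans hxz)) (by rw [sub_sub_sub_cancel_right]; linarith)
    rw [sub_sub_sub_cancel_right, Real.norm_eq_abs] at hK'
    rw [enorm_mul, ← mul_assoc, Real.enorm_eq_ofReal_abs, ← ENNReal.ofReal_mul (by positivity),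
      dist_comm, dist_eq_norm]
    gcongr
    exact hK'.trans_eq (div_eq_mul_inv _ _)
  calc _ ≤ ∫⁻ z in (closedBall x ε')ᶜ,
          ENNReal.ofReal c * (ENNReal.ofReal ((dist z x ^ (m + 1))⁻¹) * ‖g z‖ₑ) ∂ν :=
        setLIntegral_mono' measurableSet_closedBall.compl hpt
    _ ≤ ENNReal.ofReal c * (ENNReal.ofReal (2 ^ (m + 1) / ε') * M) := by
        rw [lintegral_const_mul' _ _ ENNReal.ofReal_ne_top]
        gcongr
        exact lintegral_compl_closedBall_le hM hε'
    _ ≤ ENNReal.ofReal (4 ^ (m + 1) * C₁) * M := by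
        rw [← mul_assoc, ← ENNReal.ofReal_mul (by positivity)]
        refine mul_le_mul_left (ENNReal.ofReal_le_ofReal ?_) M
        have hd : d / ε' ≤ 1 := (div_le_one hε').mpr (by linarith [norm_nonneg (y - x)])
        calc c * (2 ^ (m + 1) / ε') = 4 ^ (m + 1) * C₁ * (d / ε') := by
              rw [show (4 : ℝ) = 2 * 2 by norm_num, mul_pow]; ring
          _ ≤ 4 ^ (m + 1) * C₁ := mul_le_of_le_one_right (by positivity) hd

end Kernel

section Truncation

variable {n m : ℕ} {ν : Measure (EuclideanSpace ℝ (Fin n))} {K : EuclideanSpace ℝ (Fin n) → ℝ}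
  {C₀ C₁ : ℝ} {g : EuclideanSpace ℝ (Fin n) → ℝ}

lemma trunc_eq_integral_indicator (ε : ℝ) (x : EuclideanSpace ℝ (Fin n)) :
    trunc ν K ε g x = ∫ z, (closedBall x ε)ᶜ.indicator (fun z => K (x - z) * g z) z ∂ν :=
  (integral_indicator measurableSet_closedBall.compl).symm

lemma enorm_trunc_le_maximalOp {ε : ℝ} (hε : 0 < ε) (x : EuclideanSpace ℝ (Fin n)) :
    ‖trunc ν K ε g x‖ₑ ≤ maximalOp ν K g x := by
  rw [Real.enorm_eq_ofReal_abs]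
  exact le_iSup₂ (f := fun ε (_ : 0 < ε) => ENNReal.ofReal |trunc ν K ε g x|) ε hε

lemma enorm_trunc_le_add (hK : DifferentiableOn ℝ K {0}ᶜ) (hC₀ : 0 ≤ C₀)
    (hK_size : ∀ p, p ≠ 0 → |K p| ≤ C₀ / ‖p‖ ^ m) (hC₁ : 0 ≤ C₁)
    (hK_grad : ∀ p, p ≠ 0 → ‖fderiv ℝ K p‖ ≤ C₁ / ‖p‖ ^ (m + 1)) (hg : Integrable g ν)
    {x y : EuclideanSpace ℝ (Fin n)} {κ : ℝ} (hκ : 1 ≤ κ)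
    (hxy : ∀ᵐ z ∂ν, ‖y - x‖ ≤ κ * ‖y - z‖) {M : ℝ≥0∞}
    (hM : ∀ ρ, 0 < ρ → ∫⁻ z in closedBall x ρ, ‖g z‖ₑ ∂ν ≤ ENNReal.ofReal (ρ ^ m) * M)
    {ε : ℝ} (hε : 0 < ε) :
    ‖trunc ν K ε g y‖ₑ ≤ ‖trunc ν K (2 * (‖y - x‖ + ε)) g x‖ₑ +
      (ENNReal.ofReal ((4 * κ) ^ m * C₀) + ENNReal.ofReal (4 ^ (m + 1) * C₁)) * M := by
  set ε' := 2 * (‖y - x‖ + ε)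
  have hε' : 0 < ε' := by positivity
  have hball : closedBall y ε ⊆ closedBall x ε' :=
    closedBall_subset_closedBall' (by rw [dist_eq_norm]; linarith [norm_nonneg (y - x)])
  set F := (closedBall y ε)ᶜ.indicator fun z => K (y - z) * g z
  set G := (closedBall x ε')ᶜ.indicator fun z => K (x - z) * g z
  have hint : ∀ p {r : ℝ}, 0 < r →
      Integrable ((closedBall p r)ᶜ.indicator fun z => K (p - z) * g z) ν := fun p r hr =>
    (integrableOn_kernel_compl_closedBall hK.continuousOn hC₀ hK_size hg p hr).integrable_indicator
      measurableSet_closedBall.compl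
  have hsplit : ∫⁻ z, ‖F z - G z‖ₑ ∂ν = ∫⁻ z in closedBall x ε', ‖F z‖ₑ ∂ν +
      ∫⁻ z in (closedBall x ε')ᶜ, ‖(K (y - z) - K (x - z)) * g z‖ₑ ∂ν := by
    rw [← lintegral_add_compl _ measurableSet_closedBall]
    congr 1
    · refine setLIntegral_congr_fun measurableSet_closedBall fun z hz => ?_
      simp [G, hz]
    · refine setLIntegral_congr_fun measurableSet_closedBall.compl fun z hz => ?_
      have hzy : z ∈ (closedBall y ε)ᶜ := fun h => hz (hball h)
      simp only [F, G, indicator_of_mem hz, indicator_of_mem hzy, sub_mul]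
  calc ‖trunc ν K ε g y‖ₑ ≤ ‖trunc ν K ε' g x‖ₑ + ∫⁻ z, ‖F z - G z‖ₑ ∂ν := by
        rw [trunc_eq_integral_indicator, trunc_eq_integral_indicator]
        exact enorm_integral_le_add_lintegral_enorm_sub (hint y hε) (hint x hε')
    _ ≤ _ := by
        rw [hsplit, add_mul]
        gcongr
        · exact lintegral_kernel_near_le hC₀ hK_size hκ hxy hM hε
        · exact lintegral_kernel_sub_far_le hK hC₁ hK_grad hM hε

lemma maximalOp_le_add (hK : DifferentiableOn ℝ K {0}ᶜ) (hC₀ : 0 ≤ C₀)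
    (hK_size : ∀ p, p ≠ 0 → |K p| ≤ C₀ / ‖p‖ ^ m) (hC₁ : 0 ≤ C₁)
    (hK_grad : ∀ p, p ≠ 0 → ‖fderiv ℝ K p‖ ≤ C₁ / ‖p‖ ^ (m + 1)) (hg : Integrable g ν)
    {x y : EuclideanSpace ℝ (Fin n)} {κ : ℝ} (hκ : 1 ≤ κ)
    (hxy : ∀ᵐ z ∂ν, ‖y - x‖ ≤ κ * ‖y - z‖) {M : ℝ≥0∞}
    (hM : ∀ ρ, 0 < ρ → ∫⁻ z in closedBall x ρ, ‖g z‖ₑ ∂ν ≤ ENNReal.ofReal (ρ ^ m) * M) :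
    maximalOp ν K g y ≤ maximalOp ν K g x +
      (ENNReal.ofReal ((4 * κ) ^ m * C₀) + ENNReal.ofReal (4 ^ (m + 1) * C₁)) * M :=
  iSup₂_le fun ε hε => by
    rw [← Real.enorm_eq_ofReal_abs]
    refine (enorm_trunc_le_add hK hC₀ hK_size hC₁ hK_grad hg hκ hxy hM hε).trans ?_
    gcongr
    exact enorm_trunc_le_maximalOp (by positivity) x

end Truncation

lemma lintegral_closedBall_le_radialMax {m : ℕ} {ν : Measure (EuclideanSpace ℝ (Fin (m + 1)))}
    {g : EuclideanSpace ℝ (Fin (m + 1)) → ℝ} {x : EuclideanSpace ℝ (Fin (m + 1))} {ρ : ℝ}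
    (hρ : 0 < ρ) :
    ∫⁻ z in closedBall x ρ, ‖g z‖ₑ ∂ν ≤ ENNReal.ofReal (ρ ^ m) * radialMax ν g x := by
  calc ∫⁻ z in closedBall x ρ, ‖g z‖ₑ ∂ν = ENNReal.ofReal (ρ ^ m) *
        (ENNReal.ofReal (ρ ^ (-(m : ℝ))) * ∫⁻ z in closedBall x ρ, ENNReal.ofReal |g z| ∂ν) := by
        rw [← mul_assoc, ← ENNReal.ofReal_mul (by positivity), Real.rpow_neg hρ.le,
          Real.rpow_natCast, mul_inv_cancel₀ (by positivity), ENNReal.ofReal_one, one_mul]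
        simp only [Real.enorm_eq_ofReal_abs]
    _ ≤ ENNReal.ofReal (ρ ^ m) * radialMax ν g x := by
        gcongr
        exact le_iSup₂ (f := fun ρ (_ : 0 < ρ) => ENNReal.ofReal (ρ ^ (-(m : ℝ))) *
          ∫⁻ z in closedBall x ρ, ENNReal.ofReal |g z| ∂ν) ρ hρ

theorem statement9_general (m : ℕ)
    (K : EuclideanSpace ℝ (Fin (m + 1)) → ℝ) (C₀ C₁ : ℝ)
    (hK_diff : ContDiffOn ℝ 1 K {0}ᶜ)
    (hK_size : ∀ x : EuclideanSpace ℝ (Fin (m + 1)), x ≠ 0 →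
      |K x| ≤ C₀ * ‖x‖ ^ (-(m : ℝ)))
    (hK_grad : ∀ x : EuclideanSpace ℝ (Fin (m + 1)), x ≠ 0 →
      ‖fderiv ℝ K x‖ ≤ C₁ * ‖x‖ ^ (-(m : ℝ) - 1))
    (f : EuclideanSpace ℝ (Fin m) → ℝ) (Lf : NNReal) (hf : LipschitzWith Lf f)
    (L : ℝ) (hL : max 1 (Lf : ℝ) < L)
    (ν : Measure (EuclideanSpace ℝ (Fin (m + 1))))
    (hνside : ν (upperSet f ∪ graphSet f) = 0) :
    ∃ CN : ℝ≥0∞, CN ≠ ∞ ∧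
      ∀ g : EuclideanSpace ℝ (Fin (m + 1)) → ℝ, Integrable g ν →
        ∀ x ∈ graphSet f,
          (⨆ y ∈ cone f L (proj x), maximalOp ν K g y) ≤
            CN * (maximalOp ν K g x + radialMax ν g x) := by
  have hL1 : 1 ≤ L := (le_max_left _ _).trans hL.le
  have hLf : (Lf : ℝ) ≤ L := (le_max_right _ _).trans hL.le
  have hK_size' : ∀ p, p ≠ 0 → |K p| ≤ C₀ / ‖p‖ ^ m := fun p hp => by
    simpa [Real.rpow_neg (norm_nonneg p), div_eq_mul_inv] using hK_size p hp
  have hK_grad' : ∀ p, p ≠ 0 → ‖fderiv ℝ K p‖ ≤ C₁ / ‖p‖ ^ (m + 1) := fun p hp => by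
    have := hK_grad p hp
    rwa [show -(m : ℝ) - 1 = -((m + 1 : ℕ) : ℝ) by push_cast; ring, Real.rpow_neg (norm_nonneg p),
      Real.rpow_natCast, ← div_eq_mul_inv] at this
  have hC₀ := nonneg_of_le_mul_rpow (fun p => abs_nonneg (K p)) hK_size
  have hC₁ := nonneg_of_le_mul_rpow (fun p => norm_nonneg (fderiv ℝ K p)) hK_grad
  have hbelow : ∀ᵐ z ∂ν, z (Fin.last m) < f (proj z) :=
    measure_mono_null (fun z (hz : ¬ z (Fin.last m) < f (proj z)) =>
      (not_lt.mp hz).lt_or_eq.imp id Eq.symm) hνside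
  refine ⟨1 + (ENNReal.ofReal ((4 * (8 * L)) ^ m * C₀) + ENNReal.ofReal (4 ^ (m + 1) * C₁)),
    by finiteness, fun g hg x hx => iSup₂_le fun y hy => ?_⟩
  have hxy : ∀ᵐ z ∂ν, ‖y - x‖ ≤ 8 * L * ‖y - z‖ := hbelow.mono fun z hz => by
    linarith [norm_sub_le_of_mem_cone hL1 hx hy, sub_le_mul_norm_sub_of_mem_cone hf hLf hL1 hy hz]
  refine (maximalOp_le_add (hK_diff.differentiableOn one_ne_zero) hC₀ hK_size' hC₁ hK_grad' hg
    (by linarith) hxy fun ρ hρ => lintegral_closedBall_le_radialMax hρ).trans ?_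
  set A := ENNReal.ofReal ((4 * (8 * L)) ^ m * C₀) + ENNReal.ofReal (4 ^ (m + 1) * C₁)
  rw [add_mul 1 A, one_mul, mul_add]
  exact add_le_add le_self_add le_add_self

/-- If `K ∈ 𝒦`, `f` is Lipschitz, `L > max{1, Lip f}` and `ν ∈ Δ` vanishes on
`H_f^+ ∪ C_f`, then there is a constant `C_N` such that for every `g ∈ L¹(ν)` and `x ∈ C_f`,
`N(T^*_ν g)(x) ≤ C_N (T^*_ν g(x) + M_ν g(x))`. -/
theorem statement9 (m : ℕ) (hm : 1 ≤ m)
    (K : EuclideanSpace ℝ (Fin (m + 1)) → ℝ) (C₀ C₁ : ℝ)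
    (hK_diff : ContDiffOn ℝ 1 K {0}ᶜ)
    (hK_anti : ∀ x : EuclideanSpace ℝ (Fin (m + 1)), x ≠ 0 → K (-x) = -K x)
    (hK_size : ∀ x : EuclideanSpace ℝ (Fin (m + 1)), x ≠ 0 →
      |K x| ≤ C₀ * ‖x‖ ^ (-(m : ℝ)))
    (hK_grad : ∀ x : EuclideanSpace ℝ (Fin (m + 1)), x ≠ 0 →
      ‖fderiv ℝ K x‖ ≤ C₁ * ‖x‖ ^ (-(m : ℝ) - 1))
    (f : EuclideanSpace ℝ (Fin m) → ℝ) (Lf : NNReal) (hf : LipschitzWith Lf f)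
    (L : ℝ) (hL : max 1 (Lf : ℝ) < L)
    (ν : Measure (EuclideanSpace ℝ (Fin (m + 1)))) [IsFiniteMeasure ν]
    (Cν : ℝ)
    (hνΔ : ∀ (x : EuclideanSpace ℝ (Fin (m + 1))) (r : ℝ), 0 < r →
      ν (closedBall x r) ≤ ENNReal.ofReal (Cν * r ^ m))
    (hνside : ν (upperSet f ∪ graphSet f) = 0) :
    ∃ CN : ℝ≥0∞, CN ≠ ∞ ∧
      ∀ g : EuclideanSpace ℝ (Fin (m + 1)) → ℝ, Integrable g ν →
        ∀ x ∈ graphSet f,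
          (⨆ y ∈ cone f L (proj x), maximalOp ν K g y) ≤
            CN * (maximalOp ν K g x + radialMax ν g x) :=
  statement9_general m K C₀ C₁ hK_diff hK_size hK_grad f Lf hf L hL ν hνside
end
end

section
/- Let n ≥ 2 and let P ⊂ ℝⁿ be a closed ball. Then there exist Lipschitz functions f₁, …, f_{2n} : ℝ^{n−1} → ℝ, rotations (linear isometries) R₁, …, R_{2n} of ℝⁿ, and pairwise disjoint Borel sets A₁, …, A_{2n} ⊂ ℝⁿ such that ℝⁿ∖P = A₁ ∪ ⋯ ∪ A_{2n}, and for each i: P ⊂ R_i(H_{f_i}^− ∪ C_{f_i}) and A_i ⊂ R_i(H_{f_i}^+). -/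
open MeasureTheory Metric ENNReal Filter Set Topology

noncomputable section

/-- The open region `H_f^-` below the graph of `f`. -/
def lowerSet {m : ℕ} (f : EuclideanSpace ℝ (Fin m) → ℝ) :
    Set (EuclideanSpace ℝ (Fin (m + 1))) :=
  {p | p (Fin.last m) < f (proj p)}

/-!
Let `w = p - c` for a point `p` outside the ball and let `j` be a coordinate with `|w j|` maximal.
In the orthonormal frame in which `sign (w j) • e j` is the vertical direction, `w` has height
`h = |w j|` and horizontal distance `r ≤ √m * h` from the vertical axis through `c`. The radial
profile that follows the spherical cap of the ball until it meets the cone `r = √m * h`, and stays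
at the height `ρ / √(m + 1)` of that rim beyond it, is `√m`-Lipschitz, lies above the ball,
and lies strictly below every point of the cone outside the ball. The `2 (m + 1)` signed coordinate
directions thus give rotated Lipschitz graphs whose upper regions cover the complement of the
ball; disjointifying these pieces gives the sets `A i`.
-/

open Real

namespace BallComplement

def capHeight (K ρ : ℝ) : ℝ := ρ / √(K ^ 2 + 1)

/-- The spherical cap of radius `ρ` over the disc of radius `K * capHeight K ρ`, continued by the
constant height `capHeight K ρ` of its rim. The rim lies on the cone `r = K * h`, because
`ρ ^ 2 = (K * capHeight K ρ) ^ 2 + capHeight K ρ ^ 2`. -/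
def capProfile (K ρ r : ℝ) : ℝ := √(ρ ^ 2 - min r (K * capHeight K ρ) ^ 2)

variable {K ρ r h s t : ℝ}

lemma mul_capHeight_sq_add_capHeight_sq :
    (K * capHeight K ρ) ^ 2 + capHeight K ρ ^ 2 = ρ ^ 2 := by
  have hsq : √(K ^ 2 + 1) ^ 2 = K ^ 2 + 1 := sq_sqrt (by positivity)
  have : 0 < √(K ^ 2 + 1) := sqrt_pos.2 (by positivity)
  rw [capHeight]
  field_simp
  rw [hsq]

lemma capHeight_nonneg (hρ : 0 ≤ ρ) : 0 ≤ capHeight K ρ := by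
  unfold capHeight; positivity

lemma capProfile_of_le (hr : r ≤ K * capHeight K ρ) :
    capProfile K ρ r = √(ρ ^ 2 - r ^ 2) := by
  rw [capProfile, min_eq_left hr]

lemma capProfile_of_ge (hρ : 0 ≤ ρ) (hr : K * capHeight K ρ ≤ r) :
    capProfile K ρ r = capHeight K ρ := by
  rw [capProfile, min_eq_right hr, ← mul_capHeight_sq_add_capHeight_sq (K := K),
    add_sub_cancel_left,
    sqrt_sq (capHeight_nonneg hρ)]

lemma lipschitzOnWith_sqrt_sq_sub_sq (hK : 0 ≤ K) (hρ : 0 ≤ ρ) :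
    LipschitzOnWith K.toNNReal (fun t => √(ρ ^ 2 - t ^ 2)) (Icc 0 (K * capHeight K ρ)) := by
  refine LipschitzOnWith.of_dist_le_mul fun s hs t ht => ?_
  rw [Real.dist_eq, Real.dist_eq, Real.coe_toNNReal K hK]
  have hρ2 := mul_capHeight_sq_add_capHeight_sq (K := K) (ρ := ρ)
  set h₀ := capHeight K ρ
  obtain ⟨hs0, hs1⟩ := hs
  obtain ⟨ht0, ht1⟩ := ht
  obtain h0 | h0 : 0 = h₀ ∨ 0 < h₀ := (capHeight_nonneg hρ).eq_or_lt
  · obtain rfl : s = 0 := by rw [← h0] at hs1; linarith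
    obtain rfl : t = 0 := by rw [← h0] at ht1; linarith
    simp
  set X := √(ρ ^ 2 - s ^ 2)
  set Y := √(ρ ^ 2 - t ^ 2)
  -- Over the disc the cap stays above the rim height `h₀`: its slope is at most `K h₀ / h₀`.
  have hX : h₀ ≤ X := le_sqrt_of_sq_le (by nlinarith)
  have hY : h₀ ≤ Y := le_sqrt_of_sq_le (by nlinarith)
  have hprod : |X - Y| * (X + Y) = |s - t| * (s + t) := by
    have hdiff : (X - Y) * (X + Y) = (t - s) * (s + t) := by
      rw [show (X - Y) * (X + Y) = X ^ 2 - Y ^ 2 by ring, sq_sqrt (by nlinarith),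
        sq_sqrt (by nlinarith)]
      ring
    rw [← abs_of_pos (by linarith : 0 < X + Y), ← abs_mul, hdiff, abs_mul, abs_sub_comm,
      abs_of_nonneg (by linarith : 0 ≤ s + t)]
  refine le_of_mul_le_mul_right ?_ (by positivity : 0 < 2 * h₀)
  calc |X - Y| * (2 * h₀) ≤ |X - Y| * (X + Y) := by gcongr; linarith
    _ = |s - t| * (s + t) := hprod
    _ ≤ |s - t| * (2 * (K * h₀)) := by gcongr; linarith
    _ = K * |s - t| * (2 * h₀) := by ring

lemma lipschitzOnWith_capProfile (hK : 0 ≤ K) (hρ : 0 ≤ ρ) :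
    LipschitzOnWith K.toNNReal (capProfile K ρ) (Ici 0) := by
  have hmin : LipschitzOnWith 1 (fun r => min r (K * capHeight K ρ)) (Ici 0) :=
    (LipschitzWith.id.min_const _).lipschitzOnWith
  have := (lipschitzOnWith_sqrt_sq_sub_sq hK hρ).comp hmin fun r hr =>
    ⟨le_min hr (mul_nonneg hK (capHeight_nonneg hρ)), min_le_right _ _⟩
  rwa [mul_one] at this

lemma le_capProfile (hK : 0 ≤ K) (hρ : 0 ≤ ρ) (hr : 0 ≤ r)
    (hball : h ^ 2 + r ^ 2 ≤ ρ ^ 2) :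
    h ≤ capProfile K ρ r := by
  have hmin : 0 ≤ min r (K * capHeight K ρ) := le_min hr (mul_nonneg hK (capHeight_nonneg hρ))
  exact le_sqrt_of_sq_le (by nlinarith [min_le_left r (K * capHeight K ρ)])

lemma capProfile_lt (hK : 0 ≤ K) (hρ : 0 ≤ ρ) (hr : 0 ≤ r) (hh : 0 ≤ h)
    (hrh : r ≤ K * h)
    (hout : ρ ^ 2 < h ^ 2 + r ^ 2) : capProfile K ρ r < h := by
  rcases le_total r (K * capHeight K ρ) with hr₀ | hr₀
  · have hpos : 0 < h := by
      refine hh.lt_of_ne fun h0 => ?_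
      subst h0
      nlinarith
    rw [capProfile_of_le hr₀, sqrt_lt' hpos]
    linarith
  · have hρ2 := mul_capHeight_sq_add_capHeight_sq (K := K) (ρ := ρ)
    rw [capProfile_of_ge hρ hr₀]
    by_contra! hle
    have hKh : K * h ≤ K * capHeight K ρ := mul_le_mul_of_nonneg_left hle hK
    nlinarith [mul_le_mul hle hle hh (capHeight_nonneg hρ)]

/-- Reading `g` as a radial profile, with `r` the distance from the vertical axis and `h` the
height: the ball of radius `ρ` lies below the graph, and the points outside it in the cone
`r ≤ K * h` lie strictly above it. -/
structure IsBallProfile (K ρ : ℝ) (g : ℝ → ℝ) : Prop where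
  le_apply : ∀ r h, 0 ≤ r → √(h ^ 2 + r ^ 2) ≤ ρ → h ≤ g r
  apply_lt : ∀ r h, 0 ≤ r → 0 ≤ h → r ≤ K * h → ρ < √(h ^ 2 + r ^ 2) → g r < h

lemma isBallProfile_capProfile (hK : 0 ≤ K) (hρ : 0 ≤ ρ) :
    IsBallProfile K ρ (capProfile K ρ) where
  le_apply _ _ hr hin := le_capProfile hK hρ hr ((sqrt_le_left hρ).1 hin)
  apply_lt _ _ hr hh hrh hout := capProfile_lt hK hρ hr hh hrh ((lt_sqrt hρ).1 hout)

lemma isBallProfile_const (hρ : ρ < 0) : IsBallProfile K ρ fun _ => -1 where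
  le_apply _ _ _ hin := absurd ((sqrt_nonneg _).trans hin) hρ.not_ge
  apply_lt _ _ _ hh _ _ := by linarith

variable {m : ℕ}

lemma continuous_proj : Continuous (proj (m := m)) := by
  unfold proj; fun_prop

lemma proj_sub (p q : EuclideanSpace ℝ (Fin (m + 1))) : proj (p - q) = proj p - proj q := rfl

lemma norm_sq_eq_last_sq_add_norm_proj_sq (p : EuclideanSpace ℝ (Fin (m + 1))) :
    ‖p‖ ^ 2 = p (Fin.last m) ^ 2 + ‖proj p‖ ^ 2 := by
  simp [EuclideanSpace.norm_sq_eq, Fin.sum_univ_castSucc, proj]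
  ring

lemma norm_eq_sqrt_last_sq_add_norm_proj_sq (p : EuclideanSpace ℝ (Fin (m + 1))) :
    ‖p‖ = √(p (Fin.last m) ^ 2 + ‖proj p‖ ^ 2) := by
  rw [← norm_sq_eq_last_sq_add_norm_proj_sq, sqrt_sq (norm_nonneg p)]

lemma isOpen_upperSet {f : EuclideanSpace ℝ (Fin m) → ℝ} (hf : Continuous f) :
    IsOpen (upperSet f) :=
  isOpen_lt (hf.comp continuous_proj) (by fun_prop)

lemma lowerSet_union_graphSet (f : EuclideanSpace ℝ (Fin m) → ℝ) :
    lowerSet f ∪ graphSet f = {p | p (Fin.last m) ≤ f (proj p)} := by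
  ext p
  simp only [_root_.lowerSet, graphSet, mem_union, mem_ofPred_eq, le_iff_lt_or_eq]

def radialGraph (g : ℝ → ℝ) (q : EuclideanSpace ℝ (Fin (m + 1)))
    (x : EuclideanSpace ℝ (Fin m)) : ℝ :=
  q (Fin.last m) + g ‖x - proj q‖

lemma lipschitzWith_radialGraph {g : ℝ → ℝ} {L : NNReal} (hg : LipschitzOnWith L g (Ici 0))
    (q : EuclideanSpace ℝ (Fin (m + 1))) : LipschitzWith L (radialGraph g q) := by
  have hdist : LipschitzOnWith 1 (fun x : EuclideanSpace ℝ (Fin m) => ‖x - proj q‖) univ := by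
    simpa only [dist_eq_norm] using (LipschitzWith.dist_left (proj q)).lipschitzOnWith
  have := hg.comp hdist fun _ _ => norm_nonneg _
  rw [mul_one, lipschitzOnWith_univ] at this
  have := (LipschitzWith.const (q (Fin.last m))).add this
  rwa [zero_add] at this

variable {g : ℝ → ℝ}
  (F : EuclideanSpace ℝ (Fin (m + 1)) ≃ₗᵢ[ℝ] EuclideanSpace ℝ (Fin (m + 1)))
  (c p : EuclideanSpace ℝ (Fin (m + 1)))

lemma mem_image_upperSet_radialGraph_iff :
    p ∈ F.symm '' upperSet (radialGraph g (F c)) ↔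
      g ‖proj (F (p - c))‖ < F (p - c) (Fin.last m) := by
  rw [LinearIsometryEquiv.image_eq_preimage_symm, LinearIsometryEquiv.symm_symm, mem_preimage]
  change radialGraph g (F c) (proj (F p)) < F p (Fin.last m) ↔ _
  rw [radialGraph, map_sub, proj_sub, PiLp.sub_apply, lt_sub_iff_add_lt']

lemma mem_image_lowerSet_union_graphSet_radialGraph_iff :
    p ∈ F.symm '' (lowerSet (radialGraph g (F c)) ∪ graphSet (radialGraph g (F c))) ↔
      F (p - c) (Fin.last m) ≤ g ‖proj (F (p - c))‖ := by
  rw [LinearIsometryEquiv.image_eq_preimage_symm, LinearIsometryEquiv.symm_symm,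
    lowerSet_union_graphSet, mem_preimage, mem_ofPred_eq, radialGraph, map_sub, proj_sub,
    PiLp.sub_apply, sub_le_iff_le_add']

lemma isOpen_image_upperSet {f : EuclideanSpace ℝ (Fin m) → ℝ} (hf : Continuous f) :
    IsOpen (F.symm '' upperSet f) := by
  rw [LinearIsometryEquiv.image_eq_preimage_symm, LinearIsometryEquiv.symm_symm]
  exact (isOpen_upperSet hf).preimage F.continuous

def coordFrame (s : Bool) (j : Fin (m + 1)) :
    EuclideanSpace ℝ (Fin (m + 1)) ≃ₗᵢ[ℝ] EuclideanSpace ℝ (Fin (m + 1)) :=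
  let σ := LinearIsometryEquiv.piLpCongrLeft 2 ℝ ℝ (Equiv.swap j (Fin.last m))
  if s then σ else σ.trans (LinearIsometryEquiv.neg ℝ)

lemma coordFrame_apply_last (s : Bool) (j : Fin (m + 1)) (w : EuclideanSpace ℝ (Fin (m + 1))) :
    coordFrame s j w (Fin.last m) = if s then w j else -w j := by
  cases s <;> simp [coordFrame, LinearIsometryEquiv.piLpCongrLeft_apply, Equiv.piCongrLeft'_apply]

lemma exists_coordFrame_norm_proj_le (w : EuclideanSpace ℝ (Fin (m + 1))) :
    ∃ s j, 0 ≤ coordFrame s j w (Fin.last m) ∧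
      ‖proj (coordFrame s j w)‖ ≤ √m * coordFrame s j w (Fin.last m) := by
  obtain ⟨j, hj⟩ := Finite.exists_max fun k => |w k|
  have hlast : coordFrame (decide (0 ≤ w j)) j w (Fin.last m) = |w j| := by
    rw [coordFrame_apply_last]
    by_cases h : 0 ≤ w j
    · simp [h, abs_of_nonneg h]
    · simp [h, abs_of_neg (not_le.1 h)]
  refine ⟨decide (0 ≤ w j), j, hlast ▸ abs_nonneg _, ?_⟩
  have hnorm : ‖w‖ ^ 2 ≤ (m + 1) * |w j| ^ 2 := by
    rw [EuclideanSpace.norm_sq_eq]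
    calc ∑ k, ‖w k‖ ^ 2 ≤ ∑ _k : Fin (m + 1), |w j| ^ 2 := by
          gcongr with k; rw [Real.norm_eq_abs]; exact hj k
      _ = (m + 1) * |w j| ^ 2 := by simp
  have hsplit := norm_sq_eq_last_sq_add_norm_proj_sq (coordFrame (decide (0 ≤ w j)) j w)
  rw [LinearIsometryEquiv.norm_map, hlast] at hsplit
  rw [hlast]
  apply le_of_sq_le_sq _ (by positivity)
  rw [mul_pow, sq_sqrt (Nat.cast_nonneg m)]
  linarith

namespace IsBallProfile

variable {K ρ : ℝ} {g : ℝ → ℝ} {c p : EuclideanSpace ℝ (Fin (m + 1))}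

lemma closedBall_subset (hg : IsBallProfile K ρ g)
    (F : EuclideanSpace ℝ (Fin (m + 1)) ≃ₗᵢ[ℝ] EuclideanSpace ℝ (Fin (m + 1))) :
    closedBall c ρ ⊆
      F.symm '' (lowerSet (radialGraph g (F c)) ∪ graphSet (radialGraph g (F c))) :=
  fun p hp => (mem_image_lowerSet_union_graphSet_radialGraph_iff F c p).2 <|
    hg.le_apply _ _ (norm_nonneg _) <| by
      rwa [← norm_eq_sqrt_last_sq_add_norm_proj_sq, LinearIsometryEquiv.norm_map,
        ← dist_eq_norm]

lemma exists_mem_image_upperSet (hg : IsBallProfile √m ρ g) (hp : p ∉ closedBall c ρ) :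
    ∃ s j, p ∈ (coordFrame s j).symm '' upperSet (radialGraph g (coordFrame s j c)) := by
  obtain ⟨s, j, hh, hrh⟩ := exists_coordFrame_norm_proj_le (p - c)
  refine ⟨s, j, (mem_image_upperSet_radialGraph_iff _ c p).2 <|
    hg.apply_lt _ _ (norm_nonneg _) hh hrh ?_⟩
  rwa [← norm_eq_sqrt_last_sq_add_norm_proj_sq, LinearIsometryEquiv.norm_map, ← dist_eq_norm,
    ← not_le]

end IsBallProfile

lemma measurableSet_disjointed {α ι : Type*} [MeasurableSpace α] [Preorder ι]
    [LocallyFiniteOrderBot ι] {B : ι → Set α} (hB : ∀ i, MeasurableSet (B i)) (i : ι) :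
    MeasurableSet (disjointed B i) :=
  disjointedRec (fun _ _ ht => ht.diff (hB _)) (hB i)

end BallComplement

open BallComplement in
theorem statement16_general (m : ℕ)
    (c : EuclideanSpace ℝ (Fin (m + 1))) (ρ : ℝ) :
    ∃ (f : Fin (2 * (m + 1)) → EuclideanSpace ℝ (Fin m) → ℝ)
      (Lf : Fin (2 * (m + 1)) → NNReal)
      (R : Fin (2 * (m + 1)) →
        (EuclideanSpace ℝ (Fin (m + 1)) ≃ₗᵢ[ℝ] EuclideanSpace ℝ (Fin (m + 1))))
      (A : Fin (2 * (m + 1)) → Set (EuclideanSpace ℝ (Fin (m + 1)))),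
      (∀ i, LipschitzWith (Lf i) (f i)) ∧
      (∀ i, MeasurableSet (A i)) ∧
      (Pairwise fun i j => Disjoint (A i) (A j)) ∧
      ((closedBall c ρ)ᶜ = ⋃ i, A i) ∧
      (∀ i, closedBall c ρ ⊆ (R i) '' (lowerSet (f i) ∪ graphSet (f i))) ∧
      (∀ i, A i ⊆ (R i) '' upperSet (f i)) := by
  obtain ⟨g, L, hg_lip, hg⟩ :
      ∃ g L, LipschitzOnWith L g (Ici 0) ∧ IsBallProfile √m ρ g := by
    rcases le_or_gt 0 ρ with hρ | hρ
    · exact ⟨_, _, lipschitzOnWith_capProfile (sqrt_nonneg _) hρ,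
        isBallProfile_capProfile (sqrt_nonneg _) hρ⟩
    · exact ⟨_, 0, (LipschitzWith.const _).lipschitzOnWith, isBallProfile_const hρ⟩
  let e : Fin (2 * (m + 1)) ≃ Bool × Fin (m + 1) := (Fintype.equivFinOfCardEq (by simp)).symm
  let F i := coordFrame (e i).1 (e i).2
  let f i := radialGraph g (F i c)
  let B i := (closedBall c ρ)ᶜ ∩ (F i).symm '' upperSet (f i)
  have hB : ⋃ i, B i = (closedBall c ρ)ᶜ := by
    refine subset_antisymm (iUnion_subset fun i => inter_subset_left) fun p hp => ?_
    obtain ⟨s, j, hsj⟩ := hg.exists_mem_image_upperSet hp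
    exact mem_iUnion.2 ⟨e.symm (s, j), hp, by simpa [F, f] using hsj⟩
  refine ⟨f, fun _ => L, fun i => (F i).symm, disjointed B,
    fun i => lipschitzWith_radialGraph hg_lip _, measurableSet_disjointed fun i => ?_,
    disjoint_disjointed B, by rw [iUnion_disjointed, hB],
    fun i => hg.closedBall_subset _, fun i => (disjointed_subset B i).trans inter_subset_right⟩
  exact measurableSet_closedBall.compl.inter
    (isOpen_image_upperSet _ (lipschitzWith_radialGraph hg_lip _).continuous).measurableSet

/-- For every closed ball `P ⊂ ℝⁿ` (`n = m + 1 ≥ 2`) there are `2n`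
rotated Lipschitz graphs (given by Lipschitz functions `f i` and linear isometries `R i`)
and pairwise disjoint Borel sets `A i` such that `ℝⁿ∖P = ⋃ A i`, each
`P ⊆ R i (H_{f i}^- ∪ C_{f i})`, and each `A i ⊆ R i (H_{f i}^+)`. -/
theorem statement16 (m : ℕ) (hm : 1 ≤ m)
    (c : EuclideanSpace ℝ (Fin (m + 1))) (ρ : ℝ) :
    ∃ (f : Fin (2 * (m + 1)) → EuclideanSpace ℝ (Fin m) → ℝ)
      (Lf : Fin (2 * (m + 1)) → NNReal)
      (R : Fin (2 * (m + 1)) →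
        (EuclideanSpace ℝ (Fin (m + 1)) ≃ₗᵢ[ℝ] EuclideanSpace ℝ (Fin (m + 1))))
      (A : Fin (2 * (m + 1)) → Set (EuclideanSpace ℝ (Fin (m + 1)))),
      (∀ i, LipschitzWith (Lf i) (f i)) ∧
      (∀ i, MeasurableSet (A i)) ∧
      (Pairwise fun i j => Disjoint (A i) (A j)) ∧
      ((closedBall c ρ)ᶜ = ⋃ i, A i) ∧
      (∀ i, closedBall c ρ ⊆ (R i) '' (lowerSet (f i) ∪ graphSet (f i))) ∧
      (∀ i, A i ⊆ (R i) '' upperSet (f i)) :=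
  statement16_general m c ρ
end
end
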